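/- For all real λ, x and nonnegative integers n, p, the truncated degenerate modified Bell polynomials satisfy the recurrence B^{(p)}_{n+1,λ}(x) = (x - nλ) B^{(p)}_{n,λ}(x) - Σ_{j=0}^{n} C(n,j)(1)_{n-j,λ} ( p/(p+1) · B^{(p+1)}_{j,λ}(x) - B^{(p)}_{j,λ}(x) ). -/

import Mathlib

/-! Write `(y + x)_{m,λ} = Σ_k S(m,k) (y)_k`. The falling factorials `(y)_k` are linearly
independent, so any identity between such expansions stays true when every `(y)_k` is replaced by
an arbitrary weight `φ k`. Two identities are used this way: `(y + x)_{n+1,λ} = (y + x)_{n,λ}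
(y + x - nλ)` with `y (y)_k = (y)_{k+1} + k (y)_k`, and the degenerate Vandermonde identity
`(y + x + 1)_{n,λ} = Σ_j C(n,j) (y + x)_{j,λ} (1)_{n-j,λ}` with `(y + 1)_k = (y)_k + k (y)_{k-1}`.
For `w k = 1 / C(k+p,p)` one has `p/(p+1) · w_{p+1} k - w k = -w (k+1)`, and then both sides of
the recurrence equal `Σ_k S(n,k) (w (k+1) + (k + x - nλ) w k)`. -/

open Finset

def degFall (l x : ℝ) (n : ℕ) : ℝ := ∏ i ∈ Finset.range n, (x - i * l)

def fall (x : ℝ) (n : ℕ) : ℝ := ∏ i ∈ Finset.range n, (x - i)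

lemma degFall_succ (l x : ℝ) (n : ℕ) : degFall l x (n + 1) = degFall l x n * (x - n * l) :=
  prod_range_succ _ _

lemma fall_succ (y : ℝ) (k : ℕ) : fall y (k + 1) = fall y k * (y - k) :=
  prod_range_succ _ _

lemma fall_add_one (y : ℝ) (k : ℕ) : fall (y + 1) k = fall y k + k * fall y (k - 1) := by
  rcases k with _ | k
  · simp [fall]
  · have hshift : fall (y + 1) (k + 1) = (y + 1) * fall y k := by
      rw [fall, prod_range_succ', mul_comm]
      push_cast
      rw [sub_zero]
      exact congrArg _ (prod_congr rfl fun i _ => by ring)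
    rw [hshift, fall_succ, Nat.add_sub_cancel]
    push_cast
    ring

lemma degFall_add (l a b : ℝ) (n : ℕ) :
    degFall l (a + b) n =
      ∑ i ∈ range (n + 1), (n.choose i : ℝ) * (degFall l a i * degFall l b (n - i)) := by
  induction n with
  | zero => simp [degFall]
  | succ n ih =>
    rw [sum_choose_succ_mul (fun i j => degFall l a i * degFall l b j), degFall_succ, ih, sum_mul,
      ← sum_add_distrib]
    refine sum_congr rfl fun i hi => ?_
    have hi : i ≤ n := Nat.lt_succ_iff.mp (mem_range.mp hi)
    rw [Nat.sub_add_comm hi, degFall_succ, degFall_succ, Nat.cast_sub hi]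
    ring

lemma linearIndependent_fall : LinearIndependent ℝ (fun k (y : ℝ) => fall y k) := by
  let P : Polynomial.Sequence ℝ := ⟨descPochhammer ℝ, fun k => by
    rw [Polynomial.degree_eq_natDegree (monic_descPochhammer ℝ k).ne_zero,
      descPochhammer_natDegree]⟩
  have heval : LinearMap.ker (LinearMap.pi fun y : ℝ => Polynomial.leval y) = ⊥ :=
    LinearMap.ker_eq_bot'.mpr fun q hq => Polynomial.funext fun y => by
      simpa using congrFun hq y
  have hP : (fun k (y : ℝ) => fall y k) = (LinearMap.pi fun y : ℝ => Polynomial.leval y) ∘ P := by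
    funext k y
    exact (descPochhammer_eval_eq_prod_range k y).symm
  rw [hP]
  exact P.linearIndependent.map' _ heval

lemma div_succ_mul_inv_choose_succ_sub_inv_choose (p k : ℕ) :
    (p / (p + 1) : ℝ) * (((k + (p + 1)).choose (p + 1) : ℕ) : ℝ)⁻¹
      - (((k + p).choose p : ℕ) : ℝ)⁻¹ = -(((k + 1 + p).choose p : ℕ) : ℝ)⁻¹ := by
  have h₁ := Nat.add_one_mul_choose_eq (k + p) p
  have h₂ := Nat.add_one_mul_choose_eq (k + p) k
  rw [@Nat.choose_symm_add k p, show k + p + 1 = k + 1 + p by ring,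
    @Nat.choose_symm_add (k + 1) p] at h₂
  have ha : (((k + p).choose p : ℕ) : ℝ) ≠ 0 := by
    exact_mod_cast (Nat.choose_pos (Nat.le_add_left p k)).ne'
  have hc₁ :
      (((k + (p + 1)).choose (p + 1) : ℕ) : ℝ) = (k + p + 1) * (k + p).choose p / (p + 1) := by
    rw [eq_div_iff (by positivity), ← add_assoc]
    exact_mod_cast h₁.symm
  have hc₂ : (((k + 1 + p).choose p : ℕ) : ℝ) = (k + p + 1) * (k + p).choose p / (k + 1) := by
    rw [eq_div_iff (by positivity)]
    have h₂ := congrArg (Nat.cast (R := ℝ)) h₂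
    push_cast at h₂
    linarith
  rw [hc₁, hc₂]
  field_simp
  ring

def IsDegStirling (l x : ℝ) (S : ℕ → ℕ → ℝ) : Prop :=
  ∀ (y : ℝ) (m : ℕ), degFall l (y + x) m = ∑ k ∈ range (m + 1), S m k * fall y k

noncomputable def stirlingCoeffs (S : ℕ → ℕ → ℝ) (m : ℕ) : ℕ →₀ ℝ :=
  ∑ k ∈ range (m + 1), Finsupp.single k (S m k)

lemma linearCombination_stirlingCoeffs (S : ℕ → ℕ → ℝ) (m : ℕ) {M : Type*} [AddCommMonoid M]
    [Module ℝ M] (v : ℕ → M) :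
    Finsupp.linearCombination ℝ v (stirlingCoeffs S m) = ∑ k ∈ range (m + 1), S m k • v k := by
  simp [stirlingCoeffs]

namespace IsDegStirling

variable {l x : ℝ} {S : ℕ → ℕ → ℝ}

lemma linearCombination_fall (hS : IsDegStirling l x S) (m : ℕ) :
    Finsupp.linearCombination ℝ (fun k (y : ℝ) => fall y k) (stirlingCoeffs S m) =
      fun y => degFall l (y + x) m := by
  funext y
  simp [linearCombination_stirlingCoeffs, hS y m]

lemma sum_succ_mul (hS : IsDegStirling l x S) (φ : ℕ → ℝ) (n : ℕ) :
    ∑ k ∈ range (n + 1 + 1), S (n + 1) k * φ k =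
      ∑ k ∈ range (n + 1), S n k * (φ (k + 1) + (k + x - n * l) * φ k) := by
  have hcoeffs : stirlingCoeffs S (n + 1) = ∑ k ∈ range (n + 1),
      (Finsupp.single (k + 1) (S n k) + Finsupp.single k ((k + x - n * l) * S n k)) := by
    apply linearIndependent_fall
    rw [hS.linearCombination_fall]
    funext y
    simp only [map_sum, map_add, Finsupp.linearCombination_single, Finset.sum_apply, Pi.add_apply,
      Pi.smul_apply, smul_eq_mul, degFall_succ, hS y n, sum_mul]
    refine sum_congr rfl fun k _ => ?_
    rw [fall_succ]
    ring
  have hφ := congrArg (Finsupp.linearCombination ℝ φ) hcoeffs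
  simp only [linearCombination_stirlingCoeffs, map_sum, map_add, Finsupp.linearCombination_single,
    smul_eq_mul] at hφ
  rw [hφ]
  exact sum_congr rfl fun k _ => by ring

lemma sum_choose_mul_degFall_one_mul_sum (hS : IsDegStirling l x S) (φ : ℕ → ℝ) (n : ℕ) :
    ∑ j ∈ range (n + 1), (n.choose j : ℝ) * degFall l 1 (n - j) *
        ∑ k ∈ range (j + 1), S j k * φ k =
      ∑ k ∈ range (n + 1), S n k * (φ k + k * φ (k - 1)) := by
  have hcoeffs :
      ∑ j ∈ range (n + 1), ((n.choose j : ℝ) * degFall l 1 (n - j)) • stirlingCoeffs S j =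
        ∑ k ∈ range (n + 1), (Finsupp.single k (S n k) + Finsupp.single (k - 1) (k * S n k)) := by
    apply linearIndependent_fall
    simp only [map_sum, map_smul, hS.linearCombination_fall]
    funext y
    simp only [map_add, Finsupp.linearCombination_single, Finset.sum_apply, Pi.add_apply,
      Pi.smul_apply, smul_eq_mul]
    calc _ = degFall l (y + x + 1) n := by
          rw [degFall_add]
          exact sum_congr rfl fun j _ => by ring
      _ = degFall l (y + 1 + x) n := by ring_nf
      _ = _ := by
          rw [hS (y + 1) n]
          exact sum_congr rfl fun k _ => by rw [fall_add_one]; ring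
  have hφ := congrArg (Finsupp.linearCombination ℝ φ) hcoeffs
  simp only [linearCombination_stirlingCoeffs, map_sum, map_add, map_smul,
    Finsupp.linearCombination_single, smul_eq_mul] at hφ
  rw [hφ]
  exact sum_congr rfl fun k _ => by ring

end IsDegStirling

theorem truncated_degenerate_modified_Bell_recurrence
    (l x : ℝ) (n p : ℕ)
    (S2x : ℕ → ℕ → ℝ)
    (hSx : ∀ (y : ℝ) (m : ℕ),
      degFall l (y + x) m = ∑ k ∈ Finset.range (m + 1), S2x m k * fall y k)
    (B : ℕ → ℕ → ℝ)
    (hB : ∀ q m : ℕ,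
      B q m = ∑ k ∈ Finset.range (m + 1), S2x m k / (((k + q).choose q : ℕ) : ℝ)) :
    B p (n + 1) = (x - n * l) * B p n -
      ∑ j ∈ Finset.range (n + 1), ((n.choose j : ℕ) : ℝ) * degFall l 1 (n - j) *
        ((p : ℝ) / ((p : ℝ) + 1) * B (p + 1) j - B p j) := by
  have hS : IsDegStirling l x S2x := hSx
  set w : ℕ → ℝ := fun k => (((k + p).choose p : ℕ) : ℝ)⁻¹
  have hBp (m : ℕ) : B p m = ∑ k ∈ range (m + 1), S2x m k * w k := by
    simp only [hB, div_eq_mul_inv, w]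
  have hBdiff (j : ℕ) :
      (p : ℝ) / (p + 1) * B (p + 1) j - B p j = -∑ k ∈ range (j + 1), S2x j k * w (k + 1) := by
    rw [hB, hB, mul_sum, ← sum_sub_distrib, ← sum_neg_distrib]
    refine sum_congr rfl fun k _ => ?_
    simp only [w, div_eq_mul_inv]
    linear_combination S2x j k * div_succ_mul_inv_choose_succ_sub_inv_choose p k
  rw [hBp, hBp, hS.sum_succ_mul]
  simp_rw [hBdiff, mul_neg, sum_neg_distrib]
  rw [hS.sum_choose_mul_degFall_one_mul_sum (fun k => w (k + 1)), mul_sum, sub_neg_eq_add,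
    ← sum_add_distrib]
  refine sum_congr rfl fun k _ => ?_
  rcases k with _ | k
  · simp only [CharP.cast_eq_zero]
    ring
  · simp only [Nat.add_sub_cancel]
    push_cast
    ring
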